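/- Let the non-lift convolution f_nl act on symmetry-structured input x = [x⁽¹⁾; x⁽²⁾] (channel groups of size C_in each) by f_nl(x) = x ⋆ K_nl + b_nl, where K_nl = [[k_a, k_b], [M_2D k_b, M_2D k_a]] in block form over (output group, input group) and b_nl = [a; a]. Then f_nl(M_c M_2D x) = M_c M_2D f_nl(x), i.e. f_nl is equivariant under the joint channel-exchange and horizontal flip. -/

import Mathlib

/-- Zero padding of a 1-indexed feature map of height `H` and width `W` by
`pH` rows and `pW` columns on each side. -/
def ssrPad (H W pH pW : ℕ) {ι : Type*} (x : ι → ℕ → ℕ → ℝ) : ι → ℕ → ℕ → ℝ :=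
  fun i r c =>
    if pH + 1 ≤ r ∧ r ≤ pH + H ∧ pW + 1 ≤ c ∧ c ≤ pW + W then
      x i (r - pH) (c - pW)
    else 0

/-- Strided cross-correlation (1-indexed) of a (padded) feature map `xb` with
kernel `k`, stride `s`, kernel size `KH × KW`:
`(x ⋆ k)_{o,h,w} = Σ_{i,u,v} k_{o,i,u,v} · x̄_{i,(h−1)s+u,(w−1)s+v}`. -/
def ssrCorr (s KH KW : ℕ) {ι κ : Type*} [Fintype ι]
    (k : κ → ι → ℕ → ℕ → ℝ) (xb : ι → ℕ → ℕ → ℝ) : κ → ℕ → ℕ → ℝ :=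
  fun o h w =>
    ∑ i : ι, ∑ u ∈ Finset.Icc 1 KH, ∑ v ∈ Finset.Icc 1 KW,
      k o i u v * xb i ((h - 1) * s + u) ((w - 1) * s + v)

/-- Horizontal flip of a 1-indexed feature map of width `n`. -/
def ssrFlipW (n : ℕ) {ι : Type*} (x : ι → ℕ → ℕ → ℝ) : ι → ℕ → ℕ → ℝ :=
  fun i r c => x i r (n + 1 - c)

/-- Horizontal flip of a kernel of width `KW` (`v ↦ KW + 1 − v`). -/
def ssrFlipK (KW : ℕ) {ι κ : Type*} (k : κ → ι → ℕ → ℕ → ℝ) :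
    κ → ι → ℕ → ℕ → ℝ :=
  fun o i u v => k o i u (KW + 1 - v)

/-- The non-lift convolution on symmetry-structured input `x = [x⁽¹⁾; x⁽²⁾]`
with block kernel `K_nl = [[k_a, k_b], [M_2D k_b, M_2D k_a]]` and doubled bias
`[a; a]`: `y₁ = x⁽¹⁾⋆k_a + x⁽²⁾⋆k_b + a`,
`y₂ = x⁽¹⁾⋆(M_2D k_b) + x⁽²⁾⋆(M_2D k_a) + a`. -/
noncomputable def ssrNonLift (H W pH pW s KH KW : ℕ) {Cin Cout : ℕ}
    (ka kb : Fin Cout → Fin Cin → ℕ → ℕ → ℝ) (a : Fin Cout → ℝ)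
    (x : Fin Cin ⊕ Fin Cin → ℕ → ℕ → ℝ) :
    Fin Cout ⊕ Fin Cout → ℕ → ℕ → ℝ :=
  fun o h w =>
    Sum.elim
      (fun o' =>
        ssrCorr s KH KW ka (ssrPad H W pH pW (fun i => x (Sum.inl i))) o' h w
        + ssrCorr s KH KW kb (ssrPad H W pH pW (fun i => x (Sum.inr i))) o' h w
        + a o')
      (fun o' =>
        ssrCorr s KH KW (ssrFlipK KW kb)
            (ssrPad H W pH pW (fun i => x (Sum.inl i))) o' h w
        + ssrCorr s KH KW (ssrFlipK KW ka)
            (ssrPad H W pH pW (fun i => x (Sum.inr i))) o' h w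
        + a o')
      o

/-! Zero padding is symmetric, so it commutes with the horizontal flip. Under the alignment
condition the stride grid is symmetric too, so flipping the input of a strided cross-correlation
is the same as flipping its kernel and mirroring the output columns. As the kernel flip is an
involution, the two output groups of the block kernel `[[k_a, k_b], [M_2D k_b, M_2D k_a]]` are
exchanged. -/

theorem Finset.sum_Icc_one_reflect {M : Type*} [AddCommMonoid M] (n : ℕ) (f : ℕ → M) :
    ∑ v ∈ Finset.Icc 1 n, f (n + 1 - v) = ∑ v ∈ Finset.Icc 1 n, f v := by
  refine Finset.sum_nbij' (fun v => n + 1 - v) (fun v => n + 1 - v) ?_ ?_ ?_ ?_ fun _ _ => rfl <;>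
    intro v hv <;> simp only [Finset.mem_Icc] at hv ⊢ <;> omega

lemma ssrFlipW_comp (n : ℕ) {ι κ : Type*} (x : ι → ℕ → ℕ → ℝ) (g : κ → ι) :
    (fun j => ssrFlipW n x (g j)) = ssrFlipW n (fun j => x (g j)) :=
  rfl

lemma ssrPad_ssrFlipW (H W pH pW : ℕ) {ι : Type*} (x : ι → ℕ → ℕ → ℝ) :
    ssrPad H W pH pW (ssrFlipW W x) = ssrFlipW (W + 2 * pW) (ssrPad H W pH pW x) := by
  funext i r c
  simp only [ssrPad, ssrFlipW]
  by_cases hc : pW + 1 ≤ c ∧ c ≤ pW + W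
  · have hc' : pW + 1 ≤ W + 2 * pW + 1 - c ∧ W + 2 * pW + 1 - c ≤ pW + W := by omega
    have hcol : W + 1 - (c - pW) = W + 2 * pW + 1 - c - pW := by omega
    simp only [hc, hc', hcol, and_true]
  · have hc' : ¬(pW + 1 ≤ W + 2 * pW + 1 - c ∧ W + 2 * pW + 1 - c ≤ pW + W) := by omega
    rw [if_neg (by tauto), if_neg (by tauto)]

/-- `hWb` is the alignment condition: the mirror image of the window read by output column `w`
is exactly the window read by column `Wo + 1 - w`. -/
lemma ssrCorr_ssrFlipW (s KH KW : ℕ) {ι κ : Type*} [Fintype ι]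
    (k : κ → ι → ℕ → ℕ → ℝ) (xb : ι → ℕ → ℕ → ℝ) {Wb Wo : ℕ}
    (hWb : (Wo - 1) * s + KW = Wb) (o : κ) (h : ℕ) {w : ℕ} (hw1 : 1 ≤ w) (hw2 : w ≤ Wo) :
    ssrCorr s KH KW k (ssrFlipW Wb xb) o h w
      = ssrCorr s KH KW (ssrFlipK KW k) xb o h (Wo + 1 - w) := by
  simp only [ssrCorr, ssrFlipW, ssrFlipK]
  refine Finset.sum_congr rfl fun i _ => Finset.sum_congr rfl fun u _ => ?_
  conv_rhs => rw [← Finset.sum_Icc_one_reflect KW]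
  refine Finset.sum_congr rfl fun v hv => ?_
  rw [Finset.mem_Icc] at hv
  have hsplit : (Wo - 1) * s = (w - 1) * s + (Wo - w) * s := by
    rw [← add_mul]; congr 1; omega
  have hcol : Wb + 1 - ((w - 1) * s + v) = (Wo + 1 - w - 1) * s + (KW + 1 - v) := by
    rw [show Wo + 1 - w - 1 = Wo - w by omega]; omega
  rw [hcol, show KW + 1 - (KW + 1 - v) = v by omega]

lemma ssrCorr_ssrFlipK_ssrFlipK (s KH KW : ℕ) {ι κ : Type*} [Fintype ι]
    (k : κ → ι → ℕ → ℕ → ℝ) (xb : ι → ℕ → ℕ → ℝ) :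
    ssrCorr s KH KW (ssrFlipK KW (ssrFlipK KW k)) xb = ssrCorr s KH KW k xb := by
  funext o h w
  refine Finset.sum_congr rfl fun i _ => Finset.sum_congr rfl fun u _ =>
    Finset.sum_congr rfl fun v hv => ?_
  rw [Finset.mem_Icc] at hv
  simp only [ssrFlipK, show KW + 1 - (KW + 1 - v) = v by omega]

theorem nonLiftConvolution_equivariant_general
    (Cin Cout H W pH pW KH KW s : ℕ)
    (hK : KW ≤ W + 2 * pW) (hdiv : s ∣ (W + 2 * pW - KW))
    (ka kb : Fin Cout → Fin Cin → ℕ → ℕ → ℝ) (a : Fin Cout → ℝ)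
    (x : Fin Cin ⊕ Fin Cin → ℕ → ℕ → ℝ)
    (Wo : ℕ) (hWo : Wo = (W + 2 * pW - KW) / s + 1)
    (o : Fin Cout ⊕ Fin Cout) (h w : ℕ) (hw1 : 1 ≤ w) (hw2 : w ≤ Wo) :
    ssrNonLift H W pH pW s KH KW ka kb a
        (fun c => ssrFlipW W (fun c' => x (Sum.swap c')) c) o h w
      = ssrNonLift H W pH pW s KH KW ka kb a x (Sum.swap o) h (Wo + 1 - w) := by
  have hWb : (Wo - 1) * s + KW = W + 2 * pW := by
    rw [hWo, Nat.add_sub_cancel, Nat.div_mul_cancel hdiv, Nat.sub_add_cancel hK]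
  cases o with
  | inl o =>
    simp only [ssrNonLift, Sum.swap_inl, Sum.elim_inl, Sum.elim_inr, Sum.swap_inr,
      ssrFlipW_comp, ssrPad_ssrFlipW, ssrCorr_ssrFlipW s KH KW _ _ hWb _ h hw1 hw2]
    ring
  | inr o =>
    simp only [ssrNonLift, Sum.swap_inl, Sum.elim_inl, Sum.elim_inr, Sum.swap_inr,
      ssrFlipW_comp, ssrPad_ssrFlipW, ssrCorr_ssrFlipW s KH KW _ _ hWb _ h hw1 hw2,
      ssrCorr_ssrFlipK_ssrFlipK]
    ring

/-- The non-lift convolution is equivariant under the joint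
channel-exchange and horizontal flip: `f_nl(M_c M_2D x) = M_c M_2D f_nl(x)`,
stated pointwise over output channels `o`, rows `h`, and columns
`1 ≤ w ≤ W_o`. -/
theorem nonLiftConvolution_equivariant
    (Cin Cout H W pH pW KH KW s : ℕ)
    (hs : 0 < s) (hK : KW ≤ W + 2 * pW) (hdiv : s ∣ (W + 2 * pW - KW))
    (ka kb : Fin Cout → Fin Cin → ℕ → ℕ → ℝ) (a : Fin Cout → ℝ)
    (x : Fin Cin ⊕ Fin Cin → ℕ → ℕ → ℝ)
    (Wo : ℕ) (hWo : Wo = (W + 2 * pW - KW) / s + 1)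
    (o : Fin Cout ⊕ Fin Cout) (h w : ℕ) (hw1 : 1 ≤ w) (hw2 : w ≤ Wo) :
    ssrNonLift H W pH pW s KH KW ka kb a
        (fun c => ssrFlipW W (fun c' => x (Sum.swap c')) c) o h w
      = ssrNonLift H W pH pW s KH KW ka kb a x (Sum.swap o) h (Wo + 1 - w) :=
  nonLiftConvolution_equivariant_general Cin Cout H W pH pW KH KW s hK hdiv ka kb a x Wo hWo o h w
    hw1 hw2
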